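/- Define b_n = binom(n, n/2) for even n, b_n = 0 for odd n, and c_n = (2/(n+2))·binom(n, n/2) for even n, c_n = 0 for odd n. Then for all n ≥ 0, ∑_{r=0}^{n} binom(n, r) · b_r · c_{n−r} = (1/2) · c_n · b_{n+2}. -/

import Mathlib

/-!
For odd `n` every term vanishes, since `r` and `n - r` have opposite parity. For `n = 2m` only
`r = 2k` contributes, `b_{2k} = C(2k, k)` and `c_{2m} = Cat_m`, and factorial bookkeeping turns the
`k`-th term into `Cat_m * C(m, k) * C(m + 1, k)`. Vandermonde sums these to `Cat_m * C(2m + 1, m)`,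
which is the right-hand side because `b_{2m+2} = 2 * C(2m + 1, m)`.
-/

/-- The central binomial sequence interleaved with zeros. -/
def bSeq (n : ℕ) : ℚ := if Even n then (n.choose (n / 2) : ℚ) else 0

/-- The Catalan sequence interleaved with zeros. -/
noncomputable def cSeq (n : ℕ) : ℚ :=
  if Even n then (2 / ((n : ℚ) + 2)) * (n.choose (n / 2) : ℚ) else 0

open Finset Nat

theorem Finset.sum_range_two_mul_add_one_of_odd_eq_zero {M : Type*} [AddCommMonoid M]
    {f : ℕ → M} (hf : ∀ r, Odd r → f r = 0) (m : ℕ) :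
    ∑ r ∈ range (2 * m + 1), f r = ∑ k ∈ range (m + 1), f (2 * k) := by
  induction m with
  | zero => simp
  | succ m ih =>
    rw [show 2 * (m + 1) + 1 = 2 * m + 1 + 1 + 1 by ring, sum_range_succ, sum_range_succ, ih,
      hf _ (odd_two_mul_add_one m), add_zero, sum_range_succ (n := m + 1), mul_add_one]

theorem bSeq_two_mul (m : ℕ) : bSeq (2 * m) = centralBinom m := by
  simp [bSeq, centralBinom_eq_two_mul_choose]

theorem cSeq_two_mul (m : ℕ) : cSeq (2 * m) = catalan m := by
  rw [cSeq, if_pos (even_two_mul m), Nat.mul_div_cancel_left m two_pos,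
    ← centralBinom_eq_two_mul_choose, ← succ_mul_catalan_eq_centralBinom]
  push_cast
  field_simp

theorem bSeq_of_odd {n : ℕ} (hn : Odd n) : bSeq n = 0 := by
  simp [bSeq, Nat.not_even_iff_odd.mpr hn]

theorem cSeq_of_odd {n : ℕ} (hn : Odd n) : cSeq n = 0 := by
  simp [cSeq, Nat.not_even_iff_odd.mpr hn]

namespace Nat

theorem choose_two_mul_mul_centralBinom_mul_centralBinom {m k : ℕ} (hk : k ≤ m) :
    (2 * m).choose (2 * k) * centralBinom k * centralBinom (m - k) =
      centralBinom m * m.choose k ^ 2 := by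
  have hfact : ∀ j, centralBinom j * (j ! * j !) = (2 * j)! := fun j => by
    have h := choose_mul_factorial_mul_factorial (show j ≤ 2 * j by omega)
    rwa [show 2 * j - j = j by omega, mul_assoc, ← centralBinom_eq_two_mul_choose] at h
  refine Nat.eq_of_mul_eq_mul_right (m := (k ! * (m - k)!) ^ 2) (by positivity) ?_
  calc (2 * m).choose (2 * k) * centralBinom k * centralBinom (m - k) * (k ! * (m - k)!) ^ 2
      = (2 * m).choose (2 * k) * (centralBinom k * (k ! * k !)) *
          (centralBinom (m - k) * ((m - k)! * (m - k)!)) := by ring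
    _ = (2 * m)! := by
      rw [hfact, hfact, ← choose_mul_factorial_mul_factorial (show 2 * k ≤ 2 * m by omega)]
      congr 2; omega
    _ = centralBinom m * (m.choose k * k ! * (m - k)!) ^ 2 := by
      rw [choose_mul_factorial_mul_factorial hk, sq, hfact]
    _ = centralBinom m * m.choose k ^ 2 * (k ! * (m - k)!) ^ 2 := by ring

theorem choose_two_mul_mul_centralBinom_mul_catalan {m k : ℕ} (hk : k ≤ m) :
    (2 * m).choose (2 * k) * centralBinom k * catalan (m - k) =
      catalan m * (m.choose k * (m + 1).choose k) := by
  refine Nat.eq_of_mul_eq_mul_right (m := (m - k + 1) * (m + 1)) (by positivity) ?_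
  calc (2 * m).choose (2 * k) * centralBinom k * catalan (m - k) * ((m - k + 1) * (m + 1))
      = (2 * m).choose (2 * k) * centralBinom k * ((m - k + 1) * catalan (m - k)) * (m + 1) := by
        ring
    _ = centralBinom m * m.choose k * (m.choose k * (m + 1)) := by
      rw [succ_mul_catalan_eq_centralBinom, choose_two_mul_mul_centralBinom_mul_centralBinom hk]
      ring
    _ = (m + 1) * catalan m * m.choose k * ((m + 1).choose k * (m + 1 - k)) := by
      rw [choose_mul_succ_eq, succ_mul_catalan_eq_centralBinom]
    _ = catalan m * (m.choose k * (m + 1).choose k) * ((m - k + 1) * (m + 1)) := by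
      rw [show m + 1 - k = m - k + 1 by omega]; ring

theorem sum_range_choose_mul_choose_succ (m : ℕ) :
    ∑ k ∈ range (m + 1), m.choose k * (m + 1).choose k = (2 * m + 1).choose m := by
  rw [show 2 * m + 1 = m + 1 + m by ring, add_choose_eq, sum_antidiagonal_eq_sum_range_succ_mk]
  refine sum_congr rfl fun k hk => ?_
  rw [choose_symm (mem_range_succ_iff.mp hk), mul_comm]

theorem centralBinom_succ_eq_two_mul_choose (m : ℕ) :
    centralBinom (m + 1) = 2 * (2 * m + 1).choose m := by
  rw [centralBinom_eq_two_mul_choose, show 2 * (m + 1) = 2 * m + 1 + 1 by ring,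
    choose_succ_succ, choose_symm_half]
  ring

end Nat

theorem sum_choose_mul_bSeq_mul_cSeq_of_odd {n : ℕ} (hn : Odd n) :
    ∑ r ∈ range (n + 1), (n.choose r : ℚ) * bSeq r * cSeq (n - r) = 0 := by
  refine sum_eq_zero fun r hr => ?_
  rcases r.even_or_odd with hr' | hr'
  · rw [cSeq_of_odd (Nat.Odd.sub_even (mem_range_succ_iff.mp hr) hn hr'), mul_zero]
  · rw [bSeq_of_odd hr', mul_zero, zero_mul]

theorem sum_choose_mul_bSeq_mul_cSeq_two_mul (m : ℕ) :
    ∑ r ∈ range (2 * m + 1), ((2 * m).choose r : ℚ) * bSeq r * cSeq (2 * m - r) =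
      catalan m * (2 * m + 1).choose m := by
  rw [sum_range_two_mul_add_one_of_odd_eq_zero fun r hr => by
    rw [bSeq_of_odd hr, mul_zero, zero_mul]]
  calc ∑ k ∈ range (m + 1), ((2 * m).choose (2 * k) : ℚ) * bSeq (2 * k) * cSeq (2 * m - 2 * k)
      = ∑ k ∈ range (m + 1), ((catalan m * (m.choose k * (m + 1).choose k) : ℕ) : ℚ) :=
        sum_congr rfl fun k hk => by
          rw [← Nat.mul_sub, bSeq_two_mul, cSeq_two_mul,
            ← choose_two_mul_mul_centralBinom_mul_catalan (mem_range_succ_iff.mp hk)]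
          norm_cast
    _ = catalan m * (2 * m + 1).choose m := by
      rw [← Nat.cast_sum, ← mul_sum, sum_range_choose_mul_choose_succ]; norm_cast

/-- Binomial convolution identity
`∑_{r=0}^n binom(n,r) b_r c_{n-r} = (1/2) c_n b_{n+2}`. -/
theorem binomial_convolution_bSeq_cSeq (n : ℕ) :
    ∑ r ∈ Finset.range (n + 1), (n.choose r : ℚ) * bSeq r * cSeq (n - r) =
      (1 / 2) * cSeq n * bSeq (n + 2) := by
  rcases n.even_or_odd' with ⟨m, rfl | rfl⟩
  · rw [sum_choose_mul_bSeq_mul_cSeq_two_mul, cSeq_two_mul, show 2 * m + 2 = 2 * (m + 1) by ring,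
      bSeq_two_mul, centralBinom_succ_eq_two_mul_choose]
    push_cast; ring
  · rw [sum_choose_mul_bSeq_mul_cSeq_of_odd (odd_two_mul_add_one m),
      cSeq_of_odd (odd_two_mul_add_one m)]
    ring
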